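/- Let A ∈ Mₙ(ℂ). If there exists S ∈ GLₙ(ℂ) such that S·A = conj(A)·S and S·conj(S) = I, then there exists X ∈ GLₙ(ℂ) such that X·A·X⁻¹ has all real entries. -/
import Mathlib

open Matrix Polynomial

lemma eval_charpoly_aux {n : ℕ} (M : Matrix (Fin n) (Fin n) ℂ) (z : ℂ) :
    (Matrix.charpoly M).eval z = (z • (1 : Matrix (Fin n) (Fin n) ℂ) - M).det := by
  rw [Matrix.charpoly, ← Polynomial.coe_evalRingHom, RingHom.map_det]
  congr 1
  ext i j
  by_cases h : i = j <;>
    simp [Matrix.charmatrix_apply, Matrix.map_apply, Matrix.sub_apply, Matrix.smul_apply,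
      Matrix.one_apply, Matrix.diagonal, h]

theorem real_conjugation_of_exists_S (n : ℕ) (A : Matrix (Fin n) (Fin n) ℂ)
    (S : Matrix (Fin n) (Fin n) ℂ) (hS : IsUnit S.det)
    (hSA : S * A = A.map (starRingEnd ℂ) * S)
    (hSconj : S * S.map (starRingEnd ℂ) = 1) :
    ∃ X : Matrix (Fin n) (Fin n) ℂ, IsUnit X.det ∧
      ∀ i j, (X * A * X⁻¹) i j ∈ Set.range ((↑) : ℝ → ℂ) := by
  classical
  set cj := starRingEnd ℂ with hcj
  -- conj(S) * S = 1 as well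
  have hS' : S.map cj * S = 1 := (mul_eq_one_comm).mp hSconj
  -- the polynomial z ↦ det (z • 1 + S)
  set P : Polynomial ℂ := Matrix.charpoly (-S) with hP
  have hPmonic : P.Monic := Matrix.charpoly_monic _
  have hPne : P ≠ 0 := hPmonic.ne_zero
  -- injective family of unit-circle points
  have hden : ∀ k : ℕ, (1 : ℂ) - k * Complex.I ≠ 0 := by
    intro k h
    have := congrArg Complex.re h
    simp at this
  set φ : ℕ → ℂ := fun k => (1 + k * Complex.I) / (1 - k * Complex.I) with hφ
  have hφinj : Function.Injective φ := by
    intro a b hab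
    have := (div_eq_div_iff (hden a) (hden b)).mp hab
    have hab' : (2 : ℂ) * a * Complex.I = 2 * b * Complex.I := by ring_nf at this ⊢; linear_combination this
    have : (a : ℂ) = b := by
      field_simp [Complex.I_ne_zero] at hab'
      exact_mod_cast hab'
    exact_mod_cast this
  -- pick k with φ k not a root of P
  have hfin : Set.Finite {x | P.IsRoot x} := Polynomial.finite_setOf_isRoot hPne
  have hinf : (Set.range φ).Infinite := Set.infinite_range_of_injective hφinj
  obtain ⟨z, hzmem, hznotroot⟩ := ((hinf.diff hfin).nonempty)
  obtain ⟨k, rfl⟩ := hzmem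
  have hznotroot : ¬ P.IsRoot (φ k) := hznotroot
  set c : ℂ := 1 + k * Complex.I with hc
  have hcconj : cj c = 1 - k * Complex.I := by
    simp [hc, hcj, Complex.conj_ofNat]
    ring
  have hcne : cj c ≠ 0 := by rw [hcconj]; exact hden k
  set X : Matrix (Fin n) (Fin n) ℂ := c • 1 + (cj c) • S with hX
  -- X = conj c • (φ k • 1 + S)
  have hXfac : X = (cj c) • ((φ k) • (1 : Matrix (Fin n) (Fin n) ℂ) + S) := by
    rw [hX, smul_add, smul_smul]
    congr 2
    rw [hφ, hcconj]
    simp only []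
    rw [mul_comm, div_mul_cancel₀ _ (hden k), hc]
  have hdet : IsUnit X.det := by
    rw [isUnit_iff_ne_zero, hXfac, Matrix.det_smul]
    apply mul_ne_zero (pow_ne_zero _ hcne)
    have := eval_charpoly_aux (-S) (φ k)
    simp only [sub_neg_eq_add] at this
    rw [← this]
    exact hznotroot
  refine ⟨X, hdet, ?_⟩
  -- key: conj X * S = X
  have hXconj : X.map cj = (cj c) • 1 + c • S.map cj := by
    ext i j
    by_cases h : i = j <;>
      simp [hX, Matrix.map_apply, Matrix.add_apply, Matrix.smul_apply, Matrix.one_apply, h,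
        mul_comm]
  have hkey : X.map cj * S = X := by
    rw [hXconj, add_mul, smul_mul_assoc, smul_mul_assoc, one_mul, hS', hX, add_comm]
  -- conj A = S * A * S⁻¹
  have hAconj : A.map cj = S * A * S⁻¹ := by
    rw [hSA, Matrix.mul_assoc, Matrix.mul_nonsing_inv S hS, Matrix.mul_one]
  -- conj X = X * S⁻¹
  have hXc : X.map cj = X * S⁻¹ := by
    conv_rhs => rw [← hkey]
    rw [Matrix.mul_assoc, Matrix.mul_nonsing_inv S hS, Matrix.mul_one]
  -- conj (X⁻¹) = (conj X)⁻¹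
  have hXinvconj : (X⁻¹).map cj = (X.map cj)⁻¹ := by
    have h1 : X.map cj * (X⁻¹).map cj = 1 := by
      rw [← Matrix.map_mul, Matrix.mul_nonsing_inv X hdet]
      simp
    exact (Matrix.inv_eq_right_inv h1).symm
  have hM : (X * A * X⁻¹).map cj = X * A * X⁻¹ := by
    rw [Matrix.map_mul, Matrix.map_mul, hXinvconj, hAconj, hXc, Matrix.mul_inv_rev,
      Matrix.nonsing_inv_nonsing_inv S hS]
    calc X * S⁻¹ * (S * A * S⁻¹) * (S * X⁻¹)
        = X * (S⁻¹ * S) * A * (S⁻¹ * S) * X⁻¹ := by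
          simp only [Matrix.mul_assoc]
      _ = X * A * X⁻¹ := by
          rw [Matrix.nonsing_inv_mul S hS, Matrix.mul_one, Matrix.mul_one]
  intro i j
  have : cj ((X * A * X⁻¹) i j) = (X * A * X⁻¹) i j := by
    conv_rhs => rw [← hM]
    simp [Matrix.map_apply]
  exact ⟨((X * A * X⁻¹) i j).re, (Complex.conj_eq_iff_re.mp this)⟩
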